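/- Let g ≥ 1, r ≥ 1 and d ≥ r be integers and suppose ρ(g,r,d) := g − (r+1)(g−d+r) < −1. Then there exist an integer d′ > d and a Schubert index α′ of type (r,d′), i.e. integers 0 ≤ α′₀ ≤ ⋯ ≤ α′_r ≤ d′−r, such that α′ᵢ ≤ d′−d for every i = 0,…,r and w(α′) = ρ(g,r,d′) + 1; in particular ρ(g,r,d′,α′) := ρ(g,r,d′) − w(α′) = −1. -/

import Mathlib

/-!
Let `N := -ρ(g,r,d) - 1 ≥ 1`. Raising the degree by `e` raises `ρ` by `(r+1)e`, so with
`e := ⌈N / (r+1)⌉ ≥ 1` the required weight `ρ(g,r,d+e) + 1 = (r+1)e - N` lies in `[0, r]`.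
It is realised by the index `(0, …, 0, 1, …, 1)` with that many ones, and every entry `≤ 1 ≤ e`.
-/

open Finset

theorem exists_monotone_zero_one_sum_eq (n k : ℕ) (hk : k ≤ n) :
    ∃ α : Fin n → ℤ, Monotone α ∧ (∀ i, 0 ≤ α i ∧ α i ≤ 1) ∧ ∑ i, α i = k := by
  refine ⟨fun i => if (i : ℕ) < n - k then 0 else 1, fun i j hij => ?_, fun i => ?_, ?_⟩
  · dsimp only
    split_ifs <;> omega
  · dsimp only
    split_ifs <;> simp
  · have hcard := card_filter_add_card_filter_not (s := (univ : Finset (Fin n)))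
      (fun i => (i : ℕ) < n - k)
    simp only [card_univ, Fintype.card_fin, Fin.card_filter_val_lt] at hcard
    simp only [← ite_not (p := (_ : ℕ) < _), sum_boole]
    omega

theorem Int.exists_mul_mem_Ico (N m : ℤ) (hm : 0 < m) : ∃ e, N ≤ m * e ∧ m * e < N + m :=
  ⟨-(-N / m), by
    have := Int.ediv_mul_le (-N) hm.ne'
    have := Int.lt_ediv_add_one_mul_self (-N) hm
    constructor <;> linarith⟩

theorem exists_larger_degree_schubert_index_of_rho_lt_neg_one_general
    (g d : ℤ) (r : ℕ) (hd : (r : ℤ) ≤ d)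
    (hρ : g - ((r : ℤ) + 1) * (g - d + r) < -1) :
    ∃ d' : ℤ, d < d' ∧
      ∃ α' : Fin (r + 1) → ℤ,
        (∀ i, 0 ≤ α' i) ∧ Monotone α' ∧ (∀ i, α' i ≤ d' - r) ∧
        (∀ i, α' i ≤ d' - d) ∧
        (∑ i, α' i = g - ((r : ℤ) + 1) * (g - d' + r) + 1) ∧
        (g - ((r : ℤ) + 1) * (g - d' + r)) - ∑ i, α' i = -1 := by
  set N := -(g - ((r : ℤ) + 1) * (g - d + r)) - 1
  obtain ⟨e, hNe, heN⟩ := Int.exists_mul_mem_Ico N (r + 1) (by positivity)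
  have he : 1 ≤ e := by nlinarith
  obtain ⟨k, hk⟩ : ∃ k : ℕ, (k : ℤ) = (r + 1) * e - N := ⟨_, Int.toNat_of_nonneg (by omega)⟩
  obtain ⟨α, hmono, hα01, hsum⟩ := exists_monotone_zero_one_sum_eq (r + 1) k (by omega)
  have hweight : ∑ i, α i = g - ((r : ℤ) + 1) * (g - (d + e) + r) + 1 := by
    rw [hsum, hk]
    ring
  refine ⟨d + e, by omega, α, fun i => (hα01 i).1, hmono, fun i => by linarith [(hα01 i).2],
    fun i => by linarith [(hα01 i).2], hweight, by rw [hweight]; ring⟩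

/-- combinatorial core of the second case of the paper's Lemma on
pointed Brill–Noether divisors.
Let `g ≥ 1`, `r ≥ 1`, `d ≥ r` with `ρ(g,r,d) := g − (r+1)(g−d+r) < −1`.
Then there exist `d′ > d` and a Schubert index `α′` of type `(r,d′)` with `α′ᵢ ≤ d′−d`
for all `i` and `w(α′) = ρ(g,r,d′) + 1`; in particular `ρ(g,r,d′) − w(α′) = −1`. -/
theorem exists_larger_degree_schubert_index_of_rho_lt_neg_one
    (g d : ℤ) (r : ℕ) (hg : 1 ≤ g) (hr : 1 ≤ r) (hd : (r : ℤ) ≤ d)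
    (hρ : g - ((r : ℤ) + 1) * (g - d + r) < -1) :
    ∃ d' : ℤ, d < d' ∧
      ∃ α' : Fin (r + 1) → ℤ,
        (∀ i, 0 ≤ α' i) ∧ Monotone α' ∧ (∀ i, α' i ≤ d' - r) ∧
        (∀ i, α' i ≤ d' - d) ∧
        (∑ i, α' i = g - ((r : ℤ) + 1) * (g - d' + r) + 1) ∧
        (g - ((r : ℤ) + 1) * (g - d' + r)) - ∑ i, α' i = -1 :=
  exists_larger_degree_schubert_index_of_rho_lt_neg_one_general g d r hd hρ
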